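/- arXiv:2312.02095 — 5 statements merged into one kernel-verified Lean document; each statement's English description precedes it below -/
import Mathlib

section
/- For any loss ℓ, classification function g, and random vector (X, Y, S) with Y, S ∈ {-1,1} and P(Y=-1, S=1)=0, the identity E[ℓ(Y g(X))] = E[ℓ(S g(X))] + E[(ℓ(g(X)) - ℓ(-g(X))) · 1{Y=1, S=-1}] holds (no SCAR assumption needed). -/
open scoped Classical
open Finset

/-- Probability of an event `A` under pmf `P` on a finite sample space. -/
noncomputable def pr {Ω : Type*} [Fintype Ω] (P : Ω → ℝ) (A : Ω → Prop) : ℝ :=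
  ∑ ω, if A ω then P ω else 0

/-- Conditional expectation `E[f | A]` under pmf `P`. -/
noncomputable def cex {Ω : Type*} [Fintype Ω] (P : Ω → ℝ) (A : Ω → Prop) (f : Ω → ℝ) : ℝ :=
  (∑ ω, if A ω then P ω * f ω else 0) / pr P A

/-- Expectation `E[f]` under pmf `P`. -/
noncomputable def ex {Ω : Type*} [Fintype Ω] (P : Ω → ℝ) (f : Ω → ℝ) : ℝ :=
  ∑ ω, P ω * f ω

theorem stmt4 {Ω 𝒳 : Type*} [Fintype Ω] [Fintype 𝒳]
    (P : Ω → ℝ) (hP : ∀ ω, 0 ≤ P ω) (hPsum : ∑ ω, P ω = 1)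
    (X : Ω → 𝒳) (Y S : Ω → ℤ)
    (hY : ∀ ω, Y ω = 1 ∨ Y ω = -1) (hS : ∀ ω, S ω = 1 ∨ S ω = -1)
    (hPU : pr P (fun ω => Y ω = -1 ∧ S ω = 1) = 0)
    (g : 𝒳 → ℝ) (ℓ : ℝ → ℝ) :
    ex P (fun ω => ℓ ((Y ω : ℝ) * g (X ω)))
      = ex P (fun ω => ℓ ((S ω : ℝ) * g (X ω)))
        + ex P (fun ω => (ℓ (g (X ω)) - ℓ (-g (X ω)))
            * (if Y ω = 1 ∧ S ω = -1 then (1 : ℝ) else 0)) := by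
  have hzero : ∀ ω, Y ω = -1 ∧ S ω = 1 → P ω = 0 := by
    intro ω h
    by_contra hne
    have hpos : 0 < P ω := lt_of_le_of_ne (hP ω) (Ne.symm hne)
    have : 0 < pr P (fun ω => Y ω = -1 ∧ S ω = 1) := by
      unfold pr
      apply Finset.sum_pos'
      · intro ω' _; split <;> simp [hP ω']
      · exact ⟨ω, Finset.mem_univ ω, by simp [h, hpos]⟩
    rw [hPU] at this; exact lt_irrefl 0 this
  unfold ex
  rw [← Finset.sum_add_distrib]
  apply Finset.sum_congr rfl
  intro ω _
  rcases hY ω with hy | hy <;> rcases hS ω with hs | hs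
  · simp [hy, hs]
  · simp [hy, hs]; push_cast; ring
  · rw [hzero ω ⟨hy, hs⟩]; ring
  · simp [hy, hs]
end

section
/- Under SCAR and the PU condition, the risk satisfies R(g) = E[ℓ(Y g(X))] = π E[ℓ(g(X)) | S=1] + P(S=-1) E[ℓ(-g(X)) | S=-1] - P(Y=1, S=-1) E[ℓ(-g(X)) | S=1], where π = P(Y=1). -/
open scoped Classical
open Finset

noncomputable def wsum {Ω : Type*} [Fintype Ω] (P : Ω → ℝ) (A : Ω → Prop) (f : Ω → ℝ) : ℝ :=
  ∑ ω, if A ω then P ω * f ω else 0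

lemma cex_eq {Ω : Type*} [Fintype Ω] (P : Ω → ℝ) (A : Ω → Prop) (f : Ω → ℝ) :
    cex P A f = wsum P A f / pr P A := rfl

lemma wsum_one {Ω : Type*} [Fintype Ω] (P : Ω → ℝ) (A : Ω → Prop) :
    wsum P A (fun _ => 1) = pr P A := by
  unfold wsum pr
  exact Finset.sum_congr rfl fun ω _ => by split <;> simp

lemma pr_nonneg {Ω : Type*} [Fintype Ω] (P : Ω → ℝ) (hP : ∀ ω, 0 ≤ P ω) (A : Ω → Prop) :
    0 ≤ pr P A :=
  Finset.sum_nonneg fun ω _ => by split <;> simp [hP ω]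

lemma pr_zero_imp {Ω : Type*} [Fintype Ω] (P : Ω → ℝ) (hP : ∀ ω, 0 ≤ P ω) (A : Ω → Prop)
    (h : pr P A = 0) : ∀ ω, A ω → P ω = 0 := by
  intro ω hω
  have := (Finset.sum_eq_zero_iff_of_nonneg (fun ω _ => by split <;> simp [hP ω])).1 h ω
    (Finset.mem_univ ω)
  simpa [hω] using this

lemma pr_congr {Ω : Type*} [Fintype Ω] (P : Ω → ℝ) {A B : Ω → Prop}
    (h : ∀ ω, A ω ↔ B ω) : pr P A = pr P B :=
  Finset.sum_congr rfl fun ω _ => by simp [h ω]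

lemma pr_mono {Ω : Type*} [Fintype Ω] (P : Ω → ℝ) (hP : ∀ ω, 0 ≤ P ω) {A B : Ω → Prop}
    (h : ∀ ω, A ω → B ω) : pr P A ≤ pr P B := by
  refine Finset.sum_le_sum fun ω _ => ?_
  by_cases hA : A ω
  · simp [hA, h ω hA]
  · simp only [hA, if_false]
    split <;> simp [hP ω]

lemma wsum_fiber {Ω 𝒳 : Type*} [Fintype Ω] [Fintype 𝒳] (P : Ω → ℝ) (A : Ω → Prop)
    (X : Ω → 𝒳) (f : 𝒳 → ℝ) :
    wsum P A (fun ω => f (X ω)) = ∑ x, f x * pr P (fun ω => A ω ∧ X ω = x) := by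
  unfold wsum pr
  simp_rw [Finset.mul_sum, mul_ite, mul_zero]
  rw [Finset.sum_comm]
  refine Finset.sum_congr rfl fun ω _ => ?_
  by_cases h : A ω <;> simp [h, mul_comm]

theorem stmt5 {Ω 𝒳 : Type*} [Fintype Ω] [Fintype 𝒳]
    (P : Ω → ℝ) (hP : ∀ ω, 0 ≤ P ω) (hPsum : ∑ ω, P ω = 1)
    (X : Ω → 𝒳) (Y S : Ω → ℤ)
    (hY : ∀ ω, Y ω = 1 ∨ Y ω = -1) (hS : ∀ ω, S ω = 1 ∨ S ω = -1)
    (hPU : pr P (fun ω => Y ω = -1 ∧ S ω = 1) = 0)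
    (hSCAR : ∀ x : 𝒳, 0 < pr P (fun ω => Y ω = 1 ∧ X ω = x) →
      pr P (fun ω => S ω = 1 ∧ Y ω = 1 ∧ X ω = x) / pr P (fun ω => Y ω = 1 ∧ X ω = x)
        = pr P (fun ω => S ω = 1 ∧ Y ω = 1) / pr P (fun ω => Y ω = 1))
    (hS1 : 0 < pr P (fun ω => S ω = 1)) (hSm1 : 0 < pr P (fun ω => S ω = -1))
    (π : ℝ) (hπ : π = pr P (fun ω => Y ω = 1))
    (g : 𝒳 → ℝ) (ℓ : ℝ → ℝ) :
    ex P (fun ω => ℓ ((Y ω : ℝ) * g (X ω)))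
      = π * cex P (fun ω => S ω = 1) (fun ω => ℓ (g (X ω)))
        + pr P (fun ω => S ω = -1) * cex P (fun ω => S ω = -1) (fun ω => ℓ (-g (X ω)))
        - pr P (fun ω => Y ω = 1 ∧ S ω = -1)
            * cex P (fun ω => S ω = 1) (fun ω => ℓ (-g (X ω))) := by
  set c : ℝ := pr P (fun ω => S ω = 1 ∧ Y ω = 1) / π with hc
  have hPU' : ∀ ω, Y ω = -1 → S ω = 1 → P ω = 0 := fun ω h1 h2 =>
    pr_zero_imp P hP _ hPU ω ⟨h1, h2⟩
  have hSY : pr P (fun ω => S ω = 1 ∧ Y ω = 1) = pr P (fun ω => S ω = 1) := by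
    refine Finset.sum_congr rfl fun ω _ => ?_
    rcases hY ω with h | h
    · simp [h]
    · by_cases hs : S ω = 1 <;> simp [h, hs, hPU' ω h]
  have hπpos : 0 < π := by
    rw [hπ]
    calc (0:ℝ) < pr P (fun ω => S ω = 1) := hS1
    _ = pr P (fun ω => S ω = 1 ∧ Y ω = 1) := hSY.symm
    _ ≤ pr P (fun ω => Y ω = 1) := pr_mono P hP fun ω h => h.2
  have hcpos : 0 < c := by
    rw [hc, hSY]; exact div_pos hS1 hπpos
  -- fiberwise SCAR identity
  have hfib : ∀ x, pr P (fun ω => (S ω = 1 ∧ Y ω = 1) ∧ X ω = x)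
      = c * pr P (fun ω => (Y ω = 1) ∧ X ω = x) := by
    intro x
    have e1 : pr P (fun ω => (S ω = 1 ∧ Y ω = 1) ∧ X ω = x)
        = pr P (fun ω => S ω = 1 ∧ Y ω = 1 ∧ X ω = x) := pr_congr P fun ω => and_assoc
    rcases (pr_nonneg P hP (fun ω => Y ω = 1 ∧ X ω = x)).lt_or_eq with hpos | hzero
    · have h := hSCAR x hpos
      rw [div_eq_iff hpos.ne'] at h
      rw [e1, h, hc, hπ]
      try ring
    · have h0 : ∀ ω, (Y ω = 1 ∧ X ω = x) → P ω = 0 := pr_zero_imp P hP _ hzero.symm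
      have h2 : pr P (fun ω => S ω = 1 ∧ Y ω = 1 ∧ X ω = x) = 0 := by
        refine Finset.sum_eq_zero fun ω _ => ?_
        split
        · next h => exact h0 ω h.2
        · rfl
      rw [e1, h2, ← hzero, mul_zero]
  -- key weighted-sum identity from SCAR
  have hkey : ∀ f : 𝒳 → ℝ,
      wsum P (fun ω => S ω = 1 ∧ Y ω = 1) (fun ω => f (X ω))
        = c * wsum P (fun ω => Y ω = 1) (fun ω => f (X ω)) := by
    intro f
    rw [wsum_fiber, wsum_fiber, Finset.mul_sum]
    refine Finset.sum_congr rfl fun x _ => ?_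
    rw [hfib x]; ring
  -- split of the Y=1 weighted sum by S
  have hsplit : ∀ f : Ω → ℝ,
      wsum P (fun ω => Y ω = 1) f
        = wsum P (fun ω => S ω = 1 ∧ Y ω = 1) f
          + wsum P (fun ω => Y ω = 1 ∧ S ω = -1) f := by
    intro f
    unfold wsum
    rw [← Finset.sum_add_distrib]
    refine Finset.sum_congr rfl fun ω _ => ?_
    rcases hY ω with h | h <;> rcases hS ω with hs | hs <;> simp [h, hs]
  have hkey2 : ∀ f : 𝒳 → ℝ,
      wsum P (fun ω => Y ω = 1 ∧ S ω = -1) (fun ω => f (X ω))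
        = (1 - c) * wsum P (fun ω => Y ω = 1) (fun ω => f (X ω)) := by
    intro f
    have h1 := hsplit (fun ω => f (X ω))
    rw [hkey f] at h1
    linarith
  -- pr(Y=1 ∧ S=-1) = (1-c) π
  have hprYS : pr P (fun ω => Y ω = 1 ∧ S ω = -1) = (1 - c) * π := by
    have h := hkey2 (fun _ => 1)
    rw [wsum_one, wsum_one, ← hπ] at h
    exact h
  -- S=1 weighted sums reduce to S=1 ∧ Y=1
  have hS1Y : ∀ f : Ω → ℝ,
      wsum P (fun ω => S ω = 1) f = wsum P (fun ω => S ω = 1 ∧ Y ω = 1) f := by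
    intro f
    refine Finset.sum_congr rfl fun ω _ => ?_
    rcases hY ω with h | h
    · simp [h]
    · by_cases hs : S ω = 1 <;> simp [h, hs, hPU' ω h]
  -- S=-1 weighted sums split
  have hSm1Y : ∀ f : Ω → ℝ,
      wsum P (fun ω => S ω = -1) f
        = wsum P (fun ω => Y ω = 1 ∧ S ω = -1) f + wsum P (fun ω => Y ω = -1) f := by
    intro f
    unfold wsum
    rw [← Finset.sum_add_distrib]
    refine Finset.sum_congr rfl fun ω _ => ?_
    rcases hY ω with h | h <;> rcases hS ω with hs | hs <;> simp [h, hs, hPU' ω]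
  -- abbreviations
  set W1g := wsum P (fun ω => Y ω = 1) (fun ω => ℓ (g (X ω))) with hW1g
  set W1m := wsum P (fun ω => Y ω = 1) (fun ω => ℓ (-g (X ω))) with hW1m
  set Wm := wsum P (fun ω => Y ω = -1) (fun ω => ℓ (-g (X ω))) with hWm
  -- LHS decomposition
  have hLHS : ex P (fun ω => ℓ ((Y ω : ℝ) * g (X ω))) = W1g + Wm := by
    rw [hW1g, hWm]
    unfold ex wsum
    rw [← Finset.sum_add_distrib]
    refine Finset.sum_congr rfl fun ω _ => ?_
    rcases hY ω with h | h <;> simp [h]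
  have hprS1 : pr P (fun ω => S ω = 1) = c * π := by
    rw [← hSY, hc, div_mul_cancel₀ _ hπpos.ne']
  have hcex1 : cex P (fun ω => S ω = 1) (fun ω => ℓ (g (X ω))) = c * W1g / (c * π) := by
    rw [cex_eq, hS1Y, hkey (fun x => ℓ (g x)), hprS1, hW1g]
  have hcex2 : cex P (fun ω => S ω = 1) (fun ω => ℓ (-g (X ω))) = c * W1m / (c * π) := by
    rw [cex_eq, hS1Y, hkey (fun x => ℓ (-g x)), hprS1, hW1m]
  have hcex3 : pr P (fun ω => S ω = -1) * cex P (fun ω => S ω = -1) (fun ω => ℓ (-g (X ω)))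
      = (1 - c) * W1m + Wm := by
    rw [cex_eq, mul_div_assoc', mul_comm, mul_div_assoc, div_self hSm1.ne', mul_one,
      hSm1Y, hkey2 (fun x => ℓ (-g x)), hW1m, hWm]
  rw [hLHS, hcex1, hcex2, hcex3, hprYS]
  field_simp
  ring
end

section
/- Under SCAR and the PU condition with P(S=1) > 0 and P(S=-1) > 0, the single-sample risk formula applied to case-control data, namely π E[ℓ(g(X)) | S=1] + P(S=-1) E[ℓ(-g(X))] - P(Y=1, S=-1) E[ℓ(-g(X)) | S=1], equals the risk decomposition π E[ℓ(g(X)) | Y=1] + E[ℓ(-g(X))] - π E[ℓ(-g(X)) | Y=1] if and only if E[ℓ(-g(X)) | S=1] = E[ℓ(-g(X))]. -/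
open scoped Classical
open Finset

/-- Unnormalized conditional expectation (numerator of `cex`). -/
noncomputable def nu {Ω : Type*} [Fintype Ω] (P : Ω → ℝ) (A : Ω → Prop) (f : Ω → ℝ) : ℝ :=
  ∑ ω, if A ω then P ω * f ω else 0

lemma cex_eq_nu_div {Ω : Type*} [Fintype Ω] (P : Ω → ℝ) (A : Ω → Prop) (f : Ω → ℝ) :
    cex P A f = nu P A f / pr P A := rfl

lemma nu_const_one {Ω : Type*} [Fintype Ω] (P : Ω → ℝ) (A : Ω → Prop) :
    nu P A (fun _ => 1) = pr P A := by
  simp [nu, pr]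

lemma pr_split {Ω : Type*} [Fintype Ω] (P : Ω → ℝ) (A : Ω → Prop) (T : Ω → ℤ)
    (hT : ∀ ω, T ω = 1 ∨ T ω = -1) :
    pr P A = pr P (fun ω => A ω ∧ T ω = 1) + pr P (fun ω => A ω ∧ T ω = -1) := by
  unfold pr
  rw [← Finset.sum_add_distrib]
  apply Finset.sum_congr rfl; intro ω _
  rcases hT ω with h | h <;> by_cases hA : A ω <;> simp [h, hA]

lemma sum_fiber {Ω 𝒳 : Type*} [Fintype Ω] [Fintype 𝒳] (P : Ω → ℝ) (X : Ω → 𝒳)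
    (A : Ω → Prop) (f : 𝒳 → ℝ) :
    nu P A (fun ω => f (X ω)) = ∑ x, f x * pr P (fun ω => A ω ∧ X ω = x) := by
  unfold nu pr
  simp_rw [Finset.mul_sum]
  rw [Finset.sum_comm]
  apply Finset.sum_congr rfl; intro ω _
  by_cases hA : A ω
  · simp [hA, mul_ite, mul_comm]
  · simp [hA]

theorem stmt9 {Ω 𝒳 : Type*} [Fintype Ω] [Fintype 𝒳]
    (P : Ω → ℝ) (hP : ∀ ω, 0 ≤ P ω) (hPsum : ∑ ω, P ω = 1)
    (X : Ω → 𝒳) (Y S : Ω → ℤ)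
    (hY : ∀ ω, Y ω = 1 ∨ Y ω = -1) (hS : ∀ ω, S ω = 1 ∨ S ω = -1)
    (hPU : pr P (fun ω => Y ω = -1 ∧ S ω = 1) = 0)
    (hSCAR : ∀ x : 𝒳, 0 < pr P (fun ω => Y ω = 1 ∧ X ω = x) →
      pr P (fun ω => S ω = 1 ∧ Y ω = 1 ∧ X ω = x) / pr P (fun ω => Y ω = 1 ∧ X ω = x)
        = pr P (fun ω => S ω = 1 ∧ Y ω = 1) / pr P (fun ω => Y ω = 1))
    (hS1 : 0 < pr P (fun ω => S ω = 1)) (hSm1 : 0 < pr P (fun ω => S ω = -1))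
    (π : ℝ) (hπ : π = pr P (fun ω => Y ω = 1)) (hπ0 : 0 < π) (hπ1 : π < 1)
    (g : 𝒳 → ℝ) (ℓ : ℝ → ℝ) :
    (π * cex P (fun ω => S ω = 1) (fun ω => ℓ (g (X ω)))
        + pr P (fun ω => S ω = -1) * ex P (fun ω => ℓ (-g (X ω)))
        - pr P (fun ω => Y ω = 1 ∧ S ω = -1)
            * cex P (fun ω => S ω = 1) (fun ω => ℓ (-g (X ω)))
      = π * cex P (fun ω => Y ω = 1) (fun ω => ℓ (g (X ω)))
        + ex P (fun ω => ℓ (-g (X ω)))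
        - π * cex P (fun ω => Y ω = 1) (fun ω => ℓ (-g (X ω))))
    ↔ cex P (fun ω => S ω = 1) (fun ω => ℓ (-g (X ω)))
        = ex P (fun ω => ℓ (-g (X ω))) := by
  set c : ℝ := pr P (fun ω => S ω = 1 ∧ Y ω = 1) / π with hc
  -- pointwise fiber identity
  have hpoint : ∀ x : 𝒳, pr P (fun ω => S ω = 1 ∧ X ω = x)
      = c * pr P (fun ω => Y ω = 1 ∧ X ω = x) := by
    intro x
    have h1 : pr P (fun ω => S ω = 1 ∧ X ω = x)
        = pr P (fun ω => (S ω = 1 ∧ X ω = x) ∧ Y ω = 1)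
          + pr P (fun ω => (S ω = 1 ∧ X ω = x) ∧ Y ω = -1) :=
      pr_split P _ Y hY
    have h2 : pr P (fun ω => (S ω = 1 ∧ X ω = x) ∧ Y ω = -1) = 0 := by
      have hle := pr_mono P hP
        (A := fun ω => (S ω = 1 ∧ X ω = x) ∧ Y ω = -1)
        (B := fun ω => Y ω = -1 ∧ S ω = 1) (fun ω h => ⟨h.2, h.1.1⟩)
      have hge := pr_nonneg P hP (fun ω => (S ω = 1 ∧ X ω = x) ∧ Y ω = -1)
      linarith [hPU ▸ hle]
    have h3 : pr P (fun ω => (S ω = 1 ∧ X ω = x) ∧ Y ω = 1)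
        = pr P (fun ω => S ω = 1 ∧ Y ω = 1 ∧ X ω = x) :=
      pr_congr P (fun ω => by tauto)
    rcases lt_or_eq_of_le (pr_nonneg P hP (fun ω => Y ω = 1 ∧ X ω = x)) with hpos | hzero
    · have hsc := hSCAR x hpos
      rw [← hπ] at hsc
      have hne : pr P (fun ω => Y ω = 1 ∧ X ω = x) ≠ 0 := ne_of_gt hpos
      rw [h1, h2, h3, add_zero, hc]
      rw [div_eq_div_iff hne (ne_of_gt hπ0)] at hsc
      field_simp
      linarith [hsc]
    · have hz : pr P (fun ω => Y ω = 1 ∧ X ω = x) = 0 := hzero.symm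
      have hle := pr_mono P hP
        (A := fun ω => S ω = 1 ∧ Y ω = 1 ∧ X ω = x)
        (B := fun ω => Y ω = 1 ∧ X ω = x) (fun ω h => h.2)
      have hge := pr_nonneg P hP (fun ω => S ω = 1 ∧ Y ω = 1 ∧ X ω = x)
      rw [h1, h2, h3, add_zero, hz, mul_zero]
      linarith [hz ▸ hle]
  -- key: numerators proportional
  have key : ∀ f : 𝒳 → ℝ,
      nu P (fun ω => S ω = 1) (fun ω => f (X ω))
        = c * nu P (fun ω => Y ω = 1) (fun ω => f (X ω)) := by
    intro f
    rw [sum_fiber P X (fun ω => S ω = 1) f, sum_fiber P X (fun ω => Y ω = 1) f,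
      Finset.mul_sum]
    apply Finset.sum_congr rfl; intro x _
    rw [hpoint x]; ring
  set s : ℝ := pr P (fun ω => S ω = 1) with hs
  -- s = c * π
  have hscπ : s = c * π := by
    have h := key (fun _ => 1)
    rwa [nu_const_one, nu_const_one, ← hs, ← hπ] at h
  have hc0 : c > 0 := by
    rcases lt_trichotomy c 0 with h | h | h
    · nlinarith
    · rw [h, zero_mul] at hscπ; exact absurd hscπ (ne_of_gt hS1)
    · exact h
  -- cex equalities
  have hcex : ∀ f : 𝒳 → ℝ,
      cex P (fun ω => S ω = 1) (fun ω => f (X ω))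
        = cex P (fun ω => Y ω = 1) (fun ω => f (X ω)) := by
    intro f
    rw [cex_eq_nu_div, cex_eq_nu_div, key f, ← hs, hscπ, ← hπ,
      mul_div_mul_left _ _ (ne_of_gt hc0)]
  -- pr(S=1 ∧ Y=1) = s
  have hSY1 : pr P (fun ω => S ω = 1 ∧ Y ω = 1) = s := by
    have hsp := pr_split P (fun ω => S ω = 1) Y hY
    have h2 : pr P (fun ω => S ω = 1 ∧ Y ω = -1) = 0 := by
      have hle := pr_mono P hP (A := fun ω => S ω = 1 ∧ Y ω = -1)
        (B := fun ω => Y ω = -1 ∧ S ω = 1) (fun ω h => ⟨h.2, h.1⟩)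
      have hge := pr_nonneg P hP (fun ω => S ω = 1 ∧ Y ω = -1)
      linarith [hPU ▸ hle]
    rw [h2, add_zero] at hsp
    exact hsp.symm
  have hYSm1 : pr P (fun ω => Y ω = 1 ∧ S ω = -1) = π - s := by
    have hsplit := pr_split P (fun ω => Y ω = 1) S hS
    have h3 : pr P (fun ω => Y ω = 1 ∧ S ω = 1)
        = pr P (fun ω => S ω = 1 ∧ Y ω = 1) :=
      pr_congr P (fun ω => by tauto)
    rw [← hπ, h3, hSY1] at hsplit
    linarith
  have hSm1' : pr P (fun ω => S ω = -1) = 1 - s := by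
    have hsplit := pr_split P (fun _ => True) S hS
    have h1 : pr P (fun _ : Ω => True) = 1 := by simpa [pr] using hPsum
    have h2 : pr P (fun ω => True ∧ S ω = 1) = s := by
      rw [hs]; exact pr_congr P (fun ω => by tauto)
    have h3 : pr P (fun ω => True ∧ S ω = -1) = pr P (fun ω => S ω = -1) :=
      pr_congr P (fun ω => by tauto)
    rw [h1, h2, h3] at hsplit
    linarith
  -- final algebra
  rw [hYSm1, hSm1', ← hcex (fun t => ℓ (g t)), ← hcex (fun t => ℓ (-g t))]
  set A := cex P (fun ω => S ω = 1) (fun ω => ℓ (g (X ω)))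
  set B := ex P (fun ω => ℓ (-g (X ω)))
  set C := cex P (fun ω => S ω = 1) (fun ω => ℓ (-g (X ω)))
  constructor
  · intro h
    have h2 : s * (C - B) = 0 := by linear_combination h
    rcases mul_eq_zero.mp h2 with h3 | h3
    · exact absurd h3 (ne_of_gt hS1)
    · linarith
  · intro h; rw [h]; ring
end

section
/- For the logistic loss ℓ(s) = log(1 + e^{-s}) and linear classification function g(x) = βᵀx, under the PU condition P(Y=-1, S=1)=0, the risk satisfies E[ℓ(Y βᵀX)] = E[ℓ(S βᵀX)] - βᵀ E[X · 1{Y=1, S=-1}]; in particular the correction term E[ℓ(Y βᵀX)] - E[ℓ(S βᵀX)] is a linear function of β. -/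
open scoped Classical
open Finset

theorem stmt12 {Ω : Type*} [Fintype Ω] {p : ℕ}
    (P : Ω → ℝ) (hP : ∀ ω, 0 ≤ P ω) (hPsum : ∑ ω, P ω = 1)
    (X : Ω → (Fin p → ℝ)) (Y S : Ω → ℤ)
    (hY : ∀ ω, Y ω = 1 ∨ Y ω = -1) (hS : ∀ ω, S ω = 1 ∨ S ω = -1)
    (hPU : pr P (fun ω => Y ω = -1 ∧ S ω = 1) = 0)
    (β : Fin p → ℝ)
    (ℓ : ℝ → ℝ) (hℓ : ∀ s : ℝ, ℓ s = Real.log (1 + Real.exp (-s))) :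
    ex P (fun ω => ℓ ((Y ω : ℝ) * ∑ i, β i * X ω i))
      = ex P (fun ω => ℓ ((S ω : ℝ) * ∑ i, β i * X ω i))
        - ∑ i, β i *
            ex P (fun ω => X ω i * (if Y ω = 1 ∧ S ω = -1 then (1 : ℝ) else 0)) := by
  -- key identity: ℓ(-s) = ℓ(s) + s
  have hkey : ∀ s : ℝ, ℓ (-s) = ℓ s + s := by
    intro s
    rw [hℓ, hℓ, neg_neg]
    have h1 : (0:ℝ) < 1 + Real.exp (-s) := by positivity
    have h2 : (1:ℝ) + Real.exp s = Real.exp s * (1 + Real.exp (-s)) := by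
      rw [mul_add, mul_one, ← Real.exp_add]
      ring_nf
      rw [Real.exp_zero]
      ring
    rw [h2, Real.log_mul (Real.exp_ne_zero s) (ne_of_gt h1), Real.log_exp]
    ring
  have hP0 : ∀ ω, Y ω = -1 → S ω = 1 → P ω = 0 := by
    intro ω h1 h2
    have := (Finset.sum_eq_zero_iff_of_nonneg (fun w _ => by
      split_ifs with h
      · exact hP w
      · exact le_refl 0)).mp hPU ω (Finset.mem_univ ω)
    simpa [h1, h2] using this
  unfold ex
  rw [eq_sub_iff_add_eq]
  have hswap : ∑ i, β i * ∑ ω, P ω * (X ω i * (if Y ω = 1 ∧ S ω = -1 then (1:ℝ) else 0))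
      = ∑ ω, P ω * ((if Y ω = 1 ∧ S ω = -1 then (1:ℝ) else 0) * ∑ i, β i * X ω i) := by
    simp_rw [Finset.mul_sum]
    rw [Finset.sum_comm]
    apply Finset.sum_congr rfl
    intro ω _
    apply Finset.sum_congr rfl
    intro i _
    ring
  rw [hswap, ← Finset.sum_add_distrib]
  apply Finset.sum_congr rfl
  intro ω _
  rcases hY ω with hy | hy <;> rcases hS ω with hs | hs
  · simp [hy, hs]
  · have := hkey (∑ i, β i * X ω i)
    simp only [hy, hs]
    push_cast
    rw [neg_one_mul, hkey, one_mul]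
    simp
    ring
  · rw [hP0 ω hy hs]; ring
  · simp [hy, hs]
end

section
/- Under the PU condition and SCAR with c = P(S=1 | Y=1), for any x with P(X=x) > 0, P(S=1 | X=x) = c · P(Y=1 | X=x). -/
open scoped Classical
open Finset

theorem stmt14 {Ω 𝒳 : Type*} [Fintype Ω] [Fintype 𝒳]
    (P : Ω → ℝ) (hP : ∀ ω, 0 ≤ P ω) (hPsum : ∑ ω, P ω = 1)
    (X : Ω → 𝒳) (Y S : Ω → ℤ)
    (hY : ∀ ω, Y ω = 1 ∨ Y ω = -1) (hS : ∀ ω, S ω = 1 ∨ S ω = -1)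
    (hPU : pr P (fun ω => Y ω = -1 ∧ S ω = 1) = 0)
    (hY1 : 0 < pr P (fun ω => Y ω = 1))
    (c : ℝ) (hc : c = pr P (fun ω => S ω = 1 ∧ Y ω = 1) / pr P (fun ω => Y ω = 1))
    (hSCAR : ∀ x : 𝒳, 0 < pr P (fun ω => Y ω = 1 ∧ X ω = x) →
      pr P (fun ω => S ω = 1 ∧ Y ω = 1 ∧ X ω = x) / pr P (fun ω => Y ω = 1 ∧ X ω = x)
        = pr P (fun ω => S ω = 1 ∧ Y ω = 1) / pr P (fun ω => Y ω = 1)) :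
    ∀ x : 𝒳, 0 < pr P (fun ω => X ω = x) →
      pr P (fun ω => S ω = 1 ∧ X ω = x) / pr P (fun ω => X ω = x)
        = c * (pr P (fun ω => Y ω = 1 ∧ X ω = x) / pr P (fun ω => X ω = x)) := by
  classical
  have pr_nonneg : ∀ A : Ω → Prop, 0 ≤ pr P A := fun A =>
    Finset.sum_nonneg fun ω _ => by by_cases h : A ω <;> simp [h, hP ω]
  have pr_mono : ∀ A B : Ω → Prop, (∀ ω, A ω → B ω) → pr P A ≤ pr P B := by
    intro A B hAB
    apply Finset.sum_le_sum
    intro ω _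
    by_cases h : A ω
    · simp [h, hAB ω h]
    · by_cases h' : B ω <;> simp [h, h', hP ω]
  intro x hx
  -- key: pr (S=1 ∧ X=x) = pr (S=1 ∧ Y=1 ∧ X=x)
  have hneg : pr P (fun ω => S ω = 1 ∧ Y ω = -1 ∧ X ω = x) = 0 := by
    have h1 := pr_mono (fun ω => S ω = 1 ∧ Y ω = -1 ∧ X ω = x)
      (fun ω => Y ω = -1 ∧ S ω = 1) (fun ω h => ⟨h.2.1, h.1⟩)
    have h2 := pr_nonneg (fun ω => S ω = 1 ∧ Y ω = -1 ∧ X ω = x)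
    linarith [hPU ▸ h1]
  have hsplit : pr P (fun ω => S ω = 1 ∧ X ω = x)
      = pr P (fun ω => S ω = 1 ∧ Y ω = 1 ∧ X ω = x)
        + pr P (fun ω => S ω = 1 ∧ Y ω = -1 ∧ X ω = x) := by
    unfold pr
    rw [← Finset.sum_add_distrib]
    apply Finset.sum_congr rfl
    intro ω _
    rcases hY ω with h | h <;> by_cases hs : S ω = 1 <;> by_cases hxx : X ω = x <;>
      simp_all
  have hkey : pr P (fun ω => S ω = 1 ∧ X ω = x)
      = pr P (fun ω => S ω = 1 ∧ Y ω = 1 ∧ X ω = x) := by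
    rw [hsplit, hneg, add_zero]
  by_cases hyx : 0 < pr P (fun ω => Y ω = 1 ∧ X ω = x)
  · have hscar := hSCAR x hyx
    rw [← hc] at hscar
    have : pr P (fun ω => S ω = 1 ∧ Y ω = 1 ∧ X ω = x)
        = c * pr P (fun ω => Y ω = 1 ∧ X ω = x) := by
      field_simp at hscar
      linarith [hscar]
    rw [hkey, this, mul_div_assoc]
  · have hyx0 : pr P (fun ω => Y ω = 1 ∧ X ω = x) = 0 :=
      le_antisymm (not_lt.mp hyx) (pr_nonneg _)
    have hsy0 : pr P (fun ω => S ω = 1 ∧ Y ω = 1 ∧ X ω = x) = 0 := by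
      have h1 := pr_mono (fun ω => S ω = 1 ∧ Y ω = 1 ∧ X ω = x)
        (fun ω => Y ω = 1 ∧ X ω = x) (fun ω h => h.2)
      have h2 := pr_nonneg (fun ω => S ω = 1 ∧ Y ω = 1 ∧ X ω = x)
      linarith [hyx0 ▸ h1]
    rw [hkey, hsy0, hyx0]
    simp
end
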